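/- arXiv:0801.2075 — 6 statements merged into one kernel-verified Lean document; each statement's English description precedes it below -/
import Mathlib

section
/- For real analytic F and a real analytic solution φ of φ'' = Q₁(φ) with (φ')² = Q(φ) and φ'(0)=0 (where Q₁ = (1/2)Q'), every derivative of odd order of the composite ψ(t) = F(φ(t)) vanishes at t = 0. -/
/-!
The pair `(φ, φ')` solves the first-order system `x' = y, y' = Q₁(x)`, and so does the
time-reversed pair `t ↦ (φ(-t), -φ'(-t))`. Both start at `(φ 0, 0)` because `φ'(0) = 0`,
so by uniqueness of solutions of a locally Lipschitz system they agree near `0`: `φ`, hence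
`F ∘ φ`, is even near `0`, and the odd derivatives of an even function vanish at `0`.
-/

open Filter Topology

theorem iteratedDeriv_eq_zero_of_odd_of_eventuallyEq_comp_neg {𝕜 F : Type*}
    [NontriviallyNormedField 𝕜] [CharZero 𝕜] [NormedAddCommGroup F] [NormedSpace 𝕜 F]
    {f : 𝕜 → F} (hf : f =ᶠ[𝓝 0] fun x => f (-x)) {n : ℕ} (hn : Odd n) :
    iteratedDeriv n f 0 = 0 := by
  have h := hf.iteratedDeriv_eq n
  rw [iteratedDeriv_comp_neg, neg_zero, hn.neg_one_pow, neg_one_smul] at h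
  have h2 : (2 : 𝕜) • iteratedDeriv n f 0 = 0 := by
    rw [two_smul]
    nth_rw 1 [h]
    exact neg_add_cancel _
  exact (smul_eq_zero.mp h2).resolve_left two_ne_zero

section SecondOrderODE

variable {E : Type*} [NormedAddCommGroup E] [NormedSpace ℝ E] {G : E → E} {φ φ' : ℝ → E}

theorem hasDerivAt_reversedPhaseCurve (hφ : ∀ t, HasDerivAt φ (φ' t) t)
    (hφ' : ∀ t, HasDerivAt φ' (G (φ t)) t) (t : ℝ) :
    HasDerivAt (fun τ => (φ (-τ), -φ' (-τ))) (-φ' (-t), G (φ (-t))) t := by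
  have hpos := (hφ (-t)).scomp t (hasDerivAt_neg t)
  have hvel := ((hφ' (-t)).scomp t (hasDerivAt_neg t)).neg
  simp only [neg_one_smul, neg_neg] at hpos hvel
  exact hpos.prodMk hvel

theorem eventuallyEq_comp_neg_of_hasDerivAt_of_eq_zero (hG : ContDiffAt ℝ 1 G (φ 0))
    (hφ : ∀ t, HasDerivAt φ (φ' t) t) (hφ' : ∀ t, HasDerivAt φ' (G (φ t)) t)
    (h0 : φ' 0 = 0) : φ =ᶠ[𝓝 0] fun t => φ (-t) := by
  set v : E × E → E × E := fun p => (p.2, G p.1)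
  have hv : ContDiffAt ℝ 1 v (φ 0, φ' 0) :=
    contDiffAt_snd.prodMk (hG.comp (x := (φ 0, φ' 0)) contDiffAt_fst)
  obtain ⟨K, s, hs, hlip⟩ := hv.exists_lipschitzOnWith
  have hfwd : ∀ t, HasDerivAt (fun τ => (φ τ, φ' τ)) (v (φ t, φ' t)) t :=
    fun t => (hφ t).prodMk (hφ' t)
  have hbwd : ∀ t, HasDerivAt (fun τ => (φ (-τ), -φ' (-τ))) (v (φ (-t), -φ' (-t))) t :=
    hasDerivAt_reversedPhaseCurve hφ hφ'
  have hbwd0 : (φ (-0), -φ' (-0)) = (φ 0, φ' 0) := by simp [h0]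
  have hfwd_mem : ∀ᶠ t in 𝓝 0, (φ t, φ' t) ∈ s :=
    (hfwd 0).continuousAt.preimage_mem_nhds hs
  have hbwd_mem : ∀ᶠ t in 𝓝 0, (φ (-t), -φ' (-t)) ∈ s :=
    (hbwd 0).continuousAt.preimage_mem_nhds (hbwd0 ▸ hs)
  have hunique := ODE_solution_unique_of_eventually (v := fun _ => v) (s := fun _ => s)
    (.of_forall fun _ => hlip) (hfwd_mem.mono fun t ht => ⟨hfwd t, ht⟩)
    (hbwd_mem.mono fun t ht => ⟨hbwd t, ht⟩) hbwd0.symm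
  exact hunique.fun_comp Prod.fst

end SecondOrderODE

theorem odd_derivatives_of_composite_vanish_general
    (F Q φ : ℝ → ℝ)
    (hQ : AnalyticOn ℝ Q Set.univ)
    (hφ : AnalyticOn ℝ φ Set.univ)
    (Q₁ : ℝ → ℝ) (hQ₁ : Q₁ = fun t => (1/2) * deriv Q t)
    (hinit : deriv φ 0 = 0)
    (hODE : ∀ t, deriv (deriv φ) t = Q₁ (φ t)) :
    ∀ k : ℕ, 1 ≤ k → iteratedDeriv (2*k - 1) (F ∘ φ) 0 = 0 := by
  rw [isOpen_univ.analyticOn_iff_analyticOnNhd] at hQ hφ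
  have hQ₁_smooth : ContDiffAt ℝ 1 Q₁ (φ 0) := by
    subst hQ₁
    exact (analyticAt_const.mul (hQ.deriv _ trivial)).contDiffAt
  have hφ_deriv t : HasDerivAt φ (deriv φ t) t := (hφ t trivial).differentiableAt.hasDerivAt
  have hφ_deriv2 t : HasDerivAt (deriv φ) (Q₁ (φ t)) t :=
    hODE t ▸ (hφ.deriv t trivial).differentiableAt.hasDerivAt
  have hφ_even :=
    eventuallyEq_comp_neg_of_hasDerivAt_of_eq_zero hQ₁_smooth hφ_deriv hφ_deriv2 hinit
  intro k hk
  exact iteratedDeriv_eq_zero_of_odd_of_eventuallyEq_comp_neg (hφ_even.fun_comp F)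
    ⟨k - 1, by omega⟩

theorem odd_derivatives_of_composite_vanish
    (F Q φ : ℝ → ℝ)
    (hF : AnalyticOn ℝ F Set.univ) (hQ : AnalyticOn ℝ Q Set.univ)
    (hφ : AnalyticOn ℝ φ Set.univ)
    (Q₁ : ℝ → ℝ) (hQ₁ : Q₁ = fun t => (1/2) * deriv Q t)
    (hinit : deriv φ 0 = 0)
    (hODE : ∀ t, deriv (deriv φ) t = Q₁ (φ t))
    (hFI : ∀ t, (deriv φ t)^2 = Q (φ t)) :
    ∀ k : ℕ, 1 ≤ k → iteratedDeriv (2*k - 1) (F ∘ φ) 0 = 0 :=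
  odd_derivatives_of_composite_vanish_general F Q φ hQ hφ Q₁ hQ₁ hinit hODE
end

section
/- For 0 < s < 2, the polynomial Q(x) = −6s + 24x − 12s·x² + 8x³ + 2s·x⁴ has exactly one root in the open interval (0,1). -/
theorem Q_unique_root (s : ℝ) (hs0 : 0 < s) (hs2 : s < 2) :
    ∃! x : ℝ, x ∈ Set.Ioo (0:ℝ) 1 ∧
      -6*s + 24*x - 12*s*x^2 + 8*x^3 + 2*s*x^4 = 0 := by
  set f : ℝ → ℝ := fun x => -6*s + 24*x - 12*s*x^2 + 8*x^3 + 2*s*x^4 with hf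
  have hderiv : ∀ x : ℝ, HasDerivAt f (24 - 24*s*x + 24*x^2 + 8*s*x^3) x := by
    intro x
    have : HasDerivAt f (0 + 24*1 - 12*s*(2*x^1) + 8*(3*x^2) + 2*s*(4*x^3)) x := by
      apply HasDerivAt.add
      apply HasDerivAt.add
      apply HasDerivAt.sub
      apply HasDerivAt.add
      · exact hasDerivAt_const x _
      · exact (hasDerivAt_id x).const_mul 24 |>.congr_deriv (by ring)
      · exact ((hasDerivAt_pow 2 x).const_mul (12*s)).congr_deriv (by ring)
      · exact ((hasDerivAt_pow 3 x).const_mul 8).congr_deriv (by ring)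
      · exact ((hasDerivAt_pow 4 x).const_mul (2*s)).congr_deriv (by ring)
    convert this using 1; ring
  have hcont : ContinuousOn f (Set.Icc 0 1) :=
    (Continuous.continuousOn (by fun_prop))
  have hmono : StrictMonoOn f (Set.Icc 0 1) := by
    apply strictMonoOn_of_deriv_pos (convex_Icc 0 1) hcont
    intro x hx
    rw [interior_Icc] at hx
    rw [(hderiv x).deriv]
    nlinarith [sq_nonneg (1 - x), hx.1, hx.2, mul_pos hs0 (pow_pos hx.1 3),
      mul_pos (mul_pos hx.1 (sub_pos.mpr hs2)) (by norm_num : (24:ℝ) > 0)]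
  have h0 : f 0 < 0 := by simp [hf]; nlinarith
  have h1 : 0 < f 1 := by simp [hf]; nlinarith
  have hsub : Set.Ioo (f 0) (f 1) ⊆ f '' Set.Ioo 0 1 :=
    intermediate_value_Ioo (by norm_num) hcont
  obtain ⟨x, hx, hfx⟩ := hsub ⟨h0, h1⟩
  refine ⟨x, ⟨hx, hfx⟩, ?_⟩
  rintro y ⟨hy, hfy⟩
  have hxI : x ∈ Set.Icc (0:ℝ) 1 := Set.mem_Icc_of_Ioo hx
  have hyI : y ∈ Set.Icc (0:ℝ) 1 := Set.mem_Icc_of_Ioo hy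
  exact hmono.injOn hyI hxI (by simp only [hf]; rw [hfy]; exact hfx.symm)
end

section
/- In the symmetric case x = −y ∈ (0,1) with E = 0, the polynomial P(t) factors as P(t) = [x(15 − 5x² − 11x⁴ + x⁶)]^{−1}·(t² − x²)·(s(−15 + 10x² − 3x⁴ + t²(10 + 12x² − 6x⁴) + t⁴(−3 − 6x² + x⁴)) + 4εx(x²(−5+x²) − t⁴(3+x²) + t²(5 + 2x² + x⁴))), where C and D are given by the formulas of the boundary-value problem with y = −x. -/
/-!
Since `15 - 5x² - 11x⁴ + x⁶ = (x² - 1)(x⁴ - 10x² - 15)`, the denominators of `C` and `D` are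
`±2δ` with `δ = x(15 - 5x² - 11x⁴ + x⁶)`; after clearing `δ` the claim is a polynomial identity.
-/

lemma denom_C_eq (x : ℝ) :
    2*(x - 1)*x*(x + 1)*(-15 - 10*x^2 + x^4) = 2 * (x * (15 - 5*x^2 - 11*x^4 + x^6)) := by
  ring

lemma denom_D_eq (x : ℝ) :
    2*(x - 1)*x*(x + 1)*(15 + 10*x^2 - x^4) = -(2 * (x * (15 - 5*x^2 - 11*x^4 + x^6))) := by
  ring

theorem P_factorization_general (ε s x : ℝ)
    (hden : x * (15 - 5*x^2 - 11*x^4 + x^6) ≠ 0)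
    (C D : ℝ)
    (hC : C = 3*(10*s + 80*ε*x + 30*s*x^2 - 10*s*x^4 - 16*ε*x^5 + 2*s*x^6)
        / (2*(x - 1)*x*(x + 1)*(-15 - 10*x^2 + x^4)))
    (hD : D = 5*(-6*s - 24*ε*x - 12*s*x^2 - 8*ε*x^3 + 2*s*x^4)
        / (2*(x - 1)*x*(x + 1)*(15 + 10*x^2 - x^4))) :
    ∀ t : ℝ,
      -4*ε*t^2 - (D/5)*t^6 + (D - C/3)*t^4 + (2*C - 3*D)*t^2 - 4*ε + C - D
      = (x * (15 - 5*x^2 - 11*x^4 + x^6))⁻¹ *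
        ((t^2 - x^2) *
          (s * (-15 + 10*x^2 - 3*x^4 + t^2*(10 + 12*x^2 - 6*x^4)
              + t^4*(-3 - 6*x^2 + x^4))
           + 4*ε*x*(x^2*(-5 + x^2) - t^4*(3 + x^2) + t^2*(5 + 2*x^2 + x^4)))) := by
  intro t
  rw [hC, hD, denom_C_eq, denom_D_eq]
  -- `field_simp` can only use `hden` once the denominator is an atom.
  generalize hδ : x * (15 - 5*x^2 - 11*x^4 + x^6) = δ at hden ⊢
  field_simp
  subst hδ
  ring

/-- In the symmetric case `x = -y`, `E = 0`, the polynomial `P` factors as (2.14). -/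
theorem P_factorization (ε s x : ℝ) (hx0 : 0 < x) (hx1 : x < 1)
    (hden : x * (15 - 5*x^2 - 11*x^4 + x^6) ≠ 0)
    (C D : ℝ)
    (hC : C = 3*(10*s + 80*ε*x + 30*s*x^2 - 10*s*x^4 - 16*ε*x^5 + 2*s*x^6)
        / (2*(x - 1)*x*(x + 1)*(-15 - 10*x^2 + x^4)))
    (hD : D = 5*(-6*s - 24*ε*x - 12*s*x^2 - 8*ε*x^3 + 2*s*x^4)
        / (2*(x - 1)*x*(x + 1)*(15 + 10*x^2 - x^4))) :
    ∀ t : ℝ,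
      -4*ε*t^2 - (D/5)*t^6 + (D - C/3)*t^4 + (2*C - 3*D)*t^2 - 4*ε + C - D
      = (x * (15 - 5*x^2 - 11*x^4 + x^6))⁻¹ *
        ((t^2 - x^2) *
          (s * (-15 + 10*x^2 - 3*x^4 + t^2*(10 + 12*x^2 - 6*x^4)
              + t^4*(-3 - 6*x^2 + x^4))
           + 4*ε*x*(x^2*(-5 + x^2) - t^4*(3 + x^2) + t^2*(5 + 2*x^2 + x^4)))) :=
  P_factorization_general ε s x hden C D hC hD
end

section
/- Let 0 < s < 2, K = −4, C = 0, D > 0, E = (s²−4)/(2D), and P(g) = −(D/8)g⁴ + E/g⁴ + 1. Set y = (2(2−s)/D)^{1/4} and x = (2(2+s)/D)^{1/4}. Then P(y) = P(x) = 0, (1/2)y·P'(y) = s, (1/2)x·P'(x) = −s, and P(t) > 0 for t ∈ (y,x). -/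
theorem kaehler_boundary_conditions (s D : ℝ) (hs0 : 0 < s) (hs2 : s < 2) (hD : 0 < D)
    (E : ℝ) (hE : E = (s^2 - 4) / (2*D))
    (P : ℝ → ℝ) (hP : P = fun g => -(D/8)*g^4 + E/g^4 + 1)
    (y x : ℝ)
    (hy : y = (2*(2 - s)/D) ^ ((1:ℝ)/4))
    (hx : x = (2*(2 + s)/D) ^ ((1:ℝ)/4)) :
    P y = 0 ∧ P x = 0 ∧
    (1/2) * y * deriv P y = s ∧ (1/2) * x * deriv P x = -s ∧
    (∀ t ∈ Set.Ioo y x, 0 < P t) := by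
  have h2m : (2:ℝ) - s ≠ 0 := by linarith
  have h2p : (2:ℝ) + s ≠ 0 := by linarith
  have ha : 0 < 2*(2 - s)/D := div_pos (by linarith) hD
  have hb : 0 < 2*(2 + s)/D := div_pos (by linarith) hD
  have hy0 : 0 < y := hy ▸ Real.rpow_pos_of_pos ha _
  have hx0 : 0 < x := hx ▸ Real.rpow_pos_of_pos hb _
  have hy4 : y^4 = 2*(2 - s)/D := by
    rw [hy, ← Real.rpow_natCast _ 4, ← Real.rpow_mul ha.le]
    norm_num
  have hx4 : x^4 = 2*(2 + s)/D := by
    rw [hx, ← Real.rpow_natCast _ 4, ← Real.rpow_mul hb.le]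
    norm_num
  have hy4ne : y^4 ≠ 0 := by positivity
  have hx4ne : x^4 ≠ 0 := by positivity
  have hDne : D ≠ 0 := ne_of_gt hD
  -- derivative lemma
  have hderiv : ∀ z : ℝ, z ≠ 0 → deriv P z = -(D/8)*(4*z^3) - E*(4*z^3)/(z^4)^2 := by
    intro z hz
    have h1 : HasDerivAt (fun g : ℝ => g^4) (4*z^3) z := by
      simpa using hasDerivAt_pow 4 z
    have hz4 : z^4 ≠ 0 := pow_ne_zero _ hz
    have h2 : HasDerivAt (fun g : ℝ => E/g^4) ((0*z^4 - E*(4*z^3))/(z^4)^2) z :=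
      (hasDerivAt_const z E).div h1 hz4
    have h3 : HasDerivAt P (-(D/8)*(4*z^3) + (0*z^4 - E*(4*z^3))/(z^4)^2) z := by
      rw [hP]
      exact ((h1.const_mul (-(D/8))).add h2).add_const 1
    rw [h3.deriv]; ring
  refine ⟨?_, ?_, ?_, ?_, ?_⟩
  · rw [hP]
    simp only
    rw [hy4, hE]
    field_simp
    ring
  · rw [hP]
    simp only
    rw [hx4, hE]
    field_simp
    ring
  · have step : (1/2) * y * deriv P y = -(D/4)*y^4 - 2*E/y^4 := by
      rw [hderiv y (ne_of_gt hy0)]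
      field_simp
      ring
    rw [step, hy4, hE]
    field_simp
    ring
  · have step : (1/2) * x * deriv P x = -(D/4)*x^4 - 2*E/x^4 := by
      rw [hderiv x (ne_of_gt hx0)]
      field_simp
      ring
    rw [step, hx4, hE]
    field_simp
    ring
  · intro t ht
    obtain ⟨hty, htx⟩ := ht
    have ht0 : 0 < t := hy0.trans hty
    have ht4 : y^4 < t^4 := by
      exact pow_lt_pow_left₀ hty hy0.le (by norm_num)
    have ht4' : t^4 < x^4 := pow_lt_pow_left₀ htx ht0.le (by norm_num)
    have ht4ne : (t:ℝ)^4 ≠ 0 := by positivity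
    have key : P t = (D/8)*(x^4 - t^4)*(t^4 - y^4) / t^4 := by
      rw [hP]
      simp only
      rw [hy4, hx4, hE]
      field_simp
      ring
    rw [key]
    apply div_pos _ (by positivity)
    have hD8 : 0 < D/8 := by positivity
    exact mul_pos (mul_pos hD8 (by linarith)) (by linarith)
end

section
/- Let α > 1, y = 4(α−1)(α²+3α+1)/(α(2α²+α+2)), x = αy. Then y > 0, x > y, and there exist real A < 0, B < 0, C > 0 such that P(t) = A/t + B·t⁴ + C·t² + 4 satisfies P(y) = P(x) = 0, P'(y) = 2, P'(x) = −2. -/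
/-!
Substituting `t = y u` with `A = a y`, `B = b / y⁴`, `C = c / y²` turns `P` into
`Q(u) = a/u + b u⁴ + c u² + 4` and the boundary conditions into `Q(1) = Q(α) = 0`,
`Q'(1) = 2y`, `Q'(α) = -2y`. The three `y`-free conditions `Q(1) = Q(α) = 0`,
`Q'(1) + Q'(α) = 0` are linear in `(a, b, c)`, with solution
`a = -8α(α+1)/r`, `b = -4/(αr)`, `c = 4(α-1)²/(αr)` where `r = 2α² + α + 2`, and then
`Q'(1) / 2 = 4(α-1)(α²+3α+1)/(αr)` is exactly `y`. The signs of `a, b, c` are visible.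
-/

noncomputable def invQuartic (A B C t : ℝ) : ℝ := A / t + B * t ^ 4 + C * t ^ 2 + 4

theorem hasDerivAt_invQuartic (A B C : ℝ) {t : ℝ} (ht : t ≠ 0) :
    HasDerivAt (invQuartic A B C) (-A / t ^ 2 + 4 * B * t ^ 3 + 2 * C * t) t := by
  refine ((((((hasDerivAt_inv ht).const_mul A).add ((hasDerivAt_pow 4 t).const_mul B)).add
    ((hasDerivAt_pow 2 t).const_mul C)).add_const 4)).congr_deriv ?_
  norm_num
  ring

theorem deriv_invQuartic (A B C : ℝ) {t : ℝ} (ht : t ≠ 0) :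
    deriv (invQuartic A B C) t = -A / t ^ 2 + 4 * B * t ^ 3 + 2 * C * t :=
  (hasDerivAt_invQuartic A B C ht).deriv

theorem invQuartic_rescale (a b c y t : ℝ) :
    invQuartic (a * y) (b / y ^ 4) (c / y ^ 2) t = invQuartic a b c (t / y) := by
  simp only [invQuartic, div_pow, div_div_eq_mul_div]
  ring

theorem deriv_invQuartic_rescale (a b c : ℝ) {y t : ℝ} (hy : y ≠ 0) (ht : t ≠ 0) :
    deriv (invQuartic (a * y) (b / y ^ 4) (c / y ^ 2)) t =
      deriv (invQuartic a b c) (t / y) / y := by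
  rw [deriv_invQuartic _ _ _ ht, deriv_invQuartic _ _ _ (div_ne_zero ht hy)]
  field_simp

section Normalized

variable {α : ℝ}

-- The coefficients `a`, `b`, `c` of the header.
noncomputable def scaledA (α : ℝ) : ℝ := -8 * α * (α + 1) / (2 * α ^ 2 + α + 2)

noncomputable def scaledB (α : ℝ) : ℝ := -4 / (α * (2 * α ^ 2 + α + 2))

noncomputable def scaledC (α : ℝ) : ℝ := 4 * (α - 1) ^ 2 / (α * (2 * α ^ 2 + α + 2))

theorem two_mul_sq_add_self_add_two_pos (α : ℝ) : 0 < 2 * α ^ 2 + α + 2 := by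
  nlinarith [sq_nonneg (α + 1 / 4)]

theorem scaledA_neg (hα : 0 < α) : scaledA α < 0 :=
  div_neg_of_neg_of_pos (by nlinarith) (two_mul_sq_add_self_add_two_pos α)

theorem scaledB_neg (hα : 0 < α) : scaledB α < 0 :=
  div_neg_of_neg_of_pos (by norm_num) (mul_pos hα (two_mul_sq_add_self_add_two_pos α))

theorem scaledC_pos (hα : 1 < α) : 0 < scaledC α :=
  div_pos (by nlinarith) (mul_pos (by linarith) (two_mul_sq_add_self_add_two_pos α))

theorem invQuartic_scaled_one (hα : α ≠ 0) :
    invQuartic (scaledA α) (scaledB α) (scaledC α) 1 = 0 := by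
  have hr := (two_mul_sq_add_self_add_two_pos α).ne'
  simp only [invQuartic, scaledA, scaledB, scaledC]
  -- Kept atomic so that `field_simp` cannot refactor it and miss the cancellation.
  generalize hr_def : 2 * α ^ 2 + α + 2 = r at hr ⊢
  field_simp
  subst hr_def
  ring

theorem invQuartic_scaled_self (hα : α ≠ 0) :
    invQuartic (scaledA α) (scaledB α) (scaledC α) α = 0 := by
  have hr := (two_mul_sq_add_self_add_two_pos α).ne'
  simp only [invQuartic, scaledA, scaledB, scaledC]
  generalize hr_def : 2 * α ^ 2 + α + 2 = r at hr ⊢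
  field_simp
  subst hr_def
  ring

theorem deriv_invQuartic_scaled_one (hα : α ≠ 0) :
    deriv (invQuartic (scaledA α) (scaledB α) (scaledC α)) 1 =
      8 * (α - 1) * (α ^ 2 + 3 * α + 1) / (α * (2 * α ^ 2 + α + 2)) := by
  have hr := (two_mul_sq_add_self_add_two_pos α).ne'
  rw [deriv_invQuartic _ _ _ one_ne_zero]
  simp only [scaledA, scaledB, scaledC]
  generalize hr_def : 2 * α ^ 2 + α + 2 = r at hr ⊢
  field_simp
  subst hr_def
  ring

theorem deriv_invQuartic_scaled_self (hα : α ≠ 0) :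
    deriv (invQuartic (scaledA α) (scaledB α) (scaledC α)) α =
      -(8 * (α - 1) * (α ^ 2 + 3 * α + 1) / (α * (2 * α ^ 2 + α + 2))) := by
  have hr := (two_mul_sq_add_self_add_two_pos α).ne'
  rw [deriv_invQuartic _ _ _ hα]
  simp only [scaledA, scaledB, scaledC]
  generalize hr_def : 2 * α ^ 2 + α + 2 = r at hr ⊢
  field_simp
  subst hr_def
  ring

end Normalized

theorem exists_ABC (α : ℝ) (hα : 1 < α)
    (y x : ℝ)
    (hy : y = 4*(α - 1)*(α^2 + 3*α + 1) / (α*(2*α^2 + α + 2)))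
    (hx : x = α * y) :
    0 < y ∧ y < x ∧
    ∃ A B C : ℝ, A < 0 ∧ B < 0 ∧ 0 < C ∧
      (∀ P : ℝ → ℝ, P = (fun t => A/t + B*t^4 + C*t^2 + 4) →
        P y = 0 ∧ P x = 0 ∧ deriv P y = 2 ∧ deriv P x = -2) := by
  have hα0 : 0 < α := by linarith
  have hy0 : 0 < y := by
    have : 0 < α - 1 := by linarith
    rw [hy]
    exact div_pos (by positivity) (mul_pos hα0 (two_mul_sq_add_self_add_two_pos α))
  have hslope : 8 * (α - 1) * (α ^ 2 + 3 * α + 1) / (α * (2 * α ^ 2 + α + 2)) = 2 * y := by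
    rw [hy]; ring
  have hxy : x / y = α := by rw [hx, mul_div_cancel_right₀ _ hy0.ne']
  refine ⟨hy0, by rw [hx]; nlinarith, scaledA α * y, scaledB α / y ^ 4, scaledC α / y ^ 2,
    mul_neg_of_neg_of_pos (scaledA_neg hα0) hy0, div_neg_of_neg_of_pos (scaledB_neg hα0)
    (by positivity), div_pos (scaledC_pos hα) (by positivity), ?_⟩
  intro P hP
  obtain rfl : P = invQuartic (scaledA α * y) (scaledB α / y ^ 4) (scaledC α / y ^ 2) := hP
  have hx0 : x ≠ 0 := by rw [hx]; positivity
  refine ⟨?_, ?_, ?_, ?_⟩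
  · rw [invQuartic_rescale, div_self hy0.ne', invQuartic_scaled_one hα0.ne']
  · rw [invQuartic_rescale, hxy, invQuartic_scaled_self hα0.ne']
  · rw [deriv_invQuartic_rescale _ _ _ hy0.ne' hy0.ne', div_self hy0.ne',
      deriv_invQuartic_scaled_one hα0.ne', hslope, mul_div_cancel_right₀ _ hy0.ne']
  · rw [deriv_invQuartic_rescale _ _ _ hy0.ne' hx0, hxy, deriv_invQuartic_scaled_self hα0.ne',
      hslope, neg_div, mul_div_cancel_right₀ _ hy0.ne']
end

section
/- Suppose a smooth function h satisfies h'' = (1/2)P'(h), h(0) = y, h'(0) = 0, where P(t) = A/t + Bt⁴ + Ct² + 4 with P(y) = P(x) = 0, P'(y) = 2 > 0, P'(x) = −2 < 0, 0 < y < x, and P > 0 on (y,x). Then h is defined on all of ℝ, is periodic, and its image is exactly [y,x]. -/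
open Set Filter Topology

lemma slope_pos_near {f : ℝ → ℝ} {a c : ℝ} (hf : HasDerivAt f c a) (hc : 0 < c) :
    ∃ δ > 0, ∀ t, t ≠ a → |t - a| < δ → 0 < (f t - f a) / (t - a) := by
  have h1 := hasDerivAt_iff_tendsto_slope.1 hf
  have h2 : ∀ᶠ t in 𝓝[≠] a, 0 < slope f a t := h1.eventually (eventually_gt_nhds hc)
  rw [eventually_nhdsWithin_iff, Metric.eventually_nhds_iff] at h2
  obtain ⟨δ, hδ, H⟩ := h2
  refine ⟨δ, hδ, fun t ht h' => ?_⟩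
  have := H (by simpa [Real.dist_eq] using h') (by simpa using ht)
  simpa [slope_def_field] using this

lemma deriv_pos_right {f : ℝ → ℝ} {a c : ℝ} (hf : HasDerivAt f c a) (hc : 0 < c) :
    ∃ δ > 0, ∀ t, a < t → t < a + δ → f a < f t := by
  obtain ⟨δ, hδ, H⟩ := slope_pos_near hf hc
  refine ⟨δ, hδ, fun t ht1 ht2 => ?_⟩
  have h1 : 0 < (f t - f a) / (t - a) :=
    H t (by intro hh; rw [hh] at ht1; linarith) (by rw [abs_of_pos (by linarith)]; linarith)
  have h2 : (0:ℝ) < t - a := by linarith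
  have h3 := mul_pos h1 h2
  rw [div_mul_cancel₀ (f t - f a) (by linarith : t - a ≠ 0)] at h3
  linarith

lemma sign_near_of_deriv_neg {f : ℝ → ℝ} {a c : ℝ} (hf : HasDerivAt f c a) (hc : c < 0) :
    ∃ δ > 0, (∀ t, a < t → t < a + δ → f t < f a) ∧ (∀ t, a - δ < t → t < a → f a < f t) := by
  obtain ⟨δ, hδ, H⟩ := slope_pos_near hf.neg (by linarith)
  have key : ∀ t, t ≠ a → |t - a| < δ → 0 < (f a - f t) / (t - a) := by
    intro t ht h'
    have h0 := H t ht h'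
    have e : (-f) t - (-f) a = f a - f t := by simp only [Pi.neg_apply]; ring
    rwa [e] at h0
  refine ⟨δ, hδ, fun t ht1 ht2 => ?_, fun t ht1 ht2 => ?_⟩
  · have h1 := key t (by intro hh; rw [hh] at ht1; linarith)
      (by rw [abs_of_pos (by linarith)]; linarith)
    have h2 : (0:ℝ) < t - a := by linarith
    have h3 := mul_pos h1 h2
    rw [div_mul_cancel₀ (f a - f t) (by linarith : t - a ≠ 0)] at h3
    linarith
  · have h1 := key t (by intro hh; rw [hh] at ht2; linarith)
      (by rw [abs_of_neg (by linarith)]; linarith)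
    have h2 : t - a < 0 := by linarith
    have h3 := mul_neg_of_pos_of_neg h1 h2
    rw [div_mul_cancel₀ (f a - f t) (by linarith : t - a ≠ 0)] at h3
    linarith

lemma sign_near_of_deriv_pos' {f : ℝ → ℝ} {a c : ℝ} (hf : HasDerivAt f c a) (hc : 0 < c) :
    ∃ δ > 0, (∀ t, a < t → t < a + δ → f a < f t) ∧ (∀ t, a - δ < t → t < a → f t < f a) := by
  obtain ⟨δ, hδ, H1, H2⟩ := sign_near_of_deriv_neg hf.neg (by linarith)
  exact ⟨δ, hδ, fun t ht1 ht2 => by have := H1 t ht1 ht2; simp at this; linarith,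
    fun t ht1 ht2 => by have := H2 t ht1 ht2; simp at this; linarith⟩

lemma local_max_of_second_deriv_neg {f : ℝ → ℝ} (hf1 : ∀ t, HasDerivAt f (deriv f t) t)
    (hf2 : ∀ t, HasDerivAt (deriv f) (deriv (deriv f) t) t)
    {u : ℝ} (h1 : deriv f u = 0) (h2 : deriv (deriv f) u < 0) :
    ∃ ε > 0, ∀ t, t ≠ u → |t - u| ≤ ε → f t < f u := by
  obtain ⟨δ, hδ, H1, H2⟩ := sign_near_of_deriv_neg (hf2 u) h2
  have hcont : ∀ s : Set ℝ, ContinuousOn f s :=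
    fun s t _ => (hf1 t).continuousAt.continuousWithinAt
  have hanti : StrictAntiOn f (Icc u (u + δ/2)) := by
    apply strictAntiOn_of_deriv_neg (convex_Icc _ _) (hcont _)
    intro t ht
    rw [interior_Icc] at ht
    have := H1 t ht.1 (by linarith [ht.2])
    rwa [h1] at this
  have hmono : StrictMonoOn f (Icc (u - δ/2) u) := by
    apply strictMonoOn_of_deriv_pos (convex_Icc _ _) (hcont _)
    intro t ht
    rw [interior_Icc] at ht
    have := H2 t (by linarith [ht.1]) ht.2
    rwa [h1] at this
  refine ⟨δ/2, by linarith, fun t ht hle => ?_⟩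
  rcases lt_or_gt_of_ne ht with hlt | hgt
  · have habs : u - δ/2 ≤ t := by rw [abs_of_neg (by linarith)] at hle; linarith
    exact hmono ⟨habs, by linarith⟩ ⟨by linarith, le_refl u⟩ hlt
  · have habs : t ≤ u + δ/2 := by rw [abs_of_pos (by linarith)] at hle; linarith
    exact hanti ⟨le_refl u, by linarith⟩ ⟨by linarith, habs⟩ hgt

lemma local_min_of_second_deriv_pos {f : ℝ → ℝ} (hf1 : ∀ t, HasDerivAt f (deriv f t) t)
    (hf2 : ∀ t, HasDerivAt (deriv f) (deriv (deriv f) t) t)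
    {u : ℝ} (h1 : deriv f u = 0) (h2 : 0 < deriv (deriv f) u) :
    ∃ ε > 0, ∀ t, t ≠ u → |t - u| ≤ ε → f u < f t := by
  obtain ⟨δ, hδ, H1, H2⟩ := sign_near_of_deriv_pos' (hf2 u) h2
  have hcont : ∀ s : Set ℝ, ContinuousOn f s :=
    fun s t _ => (hf1 t).continuousAt.continuousWithinAt
  have hmono : StrictMonoOn f (Icc u (u + δ/2)) := by
    apply strictMonoOn_of_deriv_pos (convex_Icc _ _) (hcont _)
    intro t ht
    rw [interior_Icc] at ht
    have := H1 t ht.1 (by linarith [ht.2])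
    rwa [h1] at this
  have hanti : StrictAntiOn f (Icc (u - δ/2) u) := by
    apply strictAntiOn_of_deriv_neg (convex_Icc _ _) (hcont _)
    intro t ht
    rw [interior_Icc] at ht
    have := H2 t (by linarith [ht.1]) ht.2
    rwa [h1] at this
  refine ⟨δ/2, by linarith, fun t ht hle => ?_⟩
  rcases lt_or_gt_of_ne ht with hlt | hgt
  · have habs : u - δ/2 ≤ t := by rw [abs_of_neg (by linarith)] at hle; linarith
    exact hanti ⟨habs, by linarith⟩ ⟨by linarith, le_refl u⟩ hlt
  · have habs : t ≤ u + δ/2 := by rw [abs_of_pos (by linarith)] at hle; linarith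
    exact hmono ⟨le_refl u, by linarith⟩ ⟨by linarith, habs⟩ hgt

lemma hasDerivAt_P (A B C : ℝ) {t : ℝ} (ht : t ≠ 0) :
    HasDerivAt (fun s : ℝ => A/s + B*s^4 + C*s^2 + 4) (-A/t^2 + 4*B*t^3 + 2*C*t) t := by
  have e : (fun s : ℝ => A/s + B*s^4 + C*s^2 + 4)
      = fun s : ℝ => A * s⁻¹ + B*s^4 + C*s^2 + 4 := by
    funext s; rw [div_eq_mul_inv]
  rw [e]
  have h1 := (hasDerivAt_inv ht).const_mul A
  have h2 := (hasDerivAt_pow 4 t).const_mul B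
  have h3 := (hasDerivAt_pow 2 t).const_mul C
  have h4 := ((h1.add h2).add h3).add_const 4
  refine h4.congr_deriv ?_
  norm_num
  field_simp

lemma hasDerivAt_Pd (A B C : ℝ) {t : ℝ} (ht : t ≠ 0) :
    HasDerivAt (fun s : ℝ => -A/s^2 + 4*B*s^3 + 2*C*s) (2*A/t^3 + 12*B*t^2 + 2*C) t := by
  have e : (fun s : ℝ => -A/s^2 + 4*B*s^3 + 2*C*s)
      = fun s : ℝ => (-A) * (s^2)⁻¹ + (4*B)*s^3 + (2*C)*s := by
    funext s; rw [div_eq_mul_inv]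
  rw [e]
  have h1 := (((hasDerivAt_pow 2 t).inv (pow_ne_zero 2 ht)).const_mul (-A))
  have h2 := (hasDerivAt_pow 3 t).const_mul (4*B)
  have h3 := (hasDerivAt_id t).const_mul (2*C)
  have h4 := (h1.add h2).add h3
  refine h4.congr_deriv ?_
  norm_num
  field_simp
  ring

theorem global_periodic_solution (A B C : ℝ) (y x : ℝ)
    (hy : 0 < y) (hyx : y < x)
    (P : ℝ → ℝ) (hP : P = fun t => A/t + B*t^4 + C*t^2 + 4)
    (hPy : P y = 0) (hPx : P x = 0)
    (hPy' : deriv P y = 2) (hPx' : deriv P x = -2)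
    (hPpos : ∀ t ∈ Set.Ioo y x, 0 < P t)
    (h : ℝ → ℝ) (hsmooth : ContDiff ℝ (⊤ : ℕ∞) h)
    (hODE : ∀ t, deriv (deriv h) t = (1/2) * deriv P (h t))
    (h0 : h 0 = y) (h0' : deriv h 0 = 0) :
    (∃ T : ℝ, 0 < T ∧ Function.Periodic h T) ∧
    Set.range h = Set.Icc y x ∧
    (∀ t, (deriv h t)^2 = P (h t)) := by
  have hyne : y ≠ 0 := ne_of_gt hy
  have hx0 : 0 < x := lt_trans hy hyx
  have hxne : x ≠ 0 := ne_of_gt hx0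
  set Pd : ℝ → ℝ := fun s => -A/s^2 + 4*B*s^3 + 2*C*s with hPddef
  have hPdAt : ∀ t : ℝ, t ≠ 0 → HasDerivAt P (Pd t) t := fun t ht => by
    rw [hP]; exact hasDerivAt_P A B C ht
  have hderivP : ∀ t : ℝ, t ≠ 0 → deriv P t = Pd t := fun t ht => (hPdAt t ht).deriv
  have hPdy : Pd y = 2 := by rw [← hderivP y hyne, hPy']
  have hPdx : Pd x = -2 := by rw [← hderivP x hxne, hPx']
  have hPdcont : ∀ t : ℝ, t ≠ 0 → ContinuousAt Pd t :=
    fun t ht => (hasDerivAt_Pd A B C ht).continuousAt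
  have hPcont : ∀ t : ℝ, t ≠ 0 → ContinuousAt P t := fun t ht => (hPdAt t ht).continuousAt
  have hs1 : ContDiff ℝ ((⊤:ℕ∞) : WithTop ℕ∞) h := hsmooth.of_le (by simp)
  have hdiff : Differentiable ℝ h := (contDiff_infty_iff_deriv.mp hs1).1
  have hd1 : ∀ t, HasDerivAt h (deriv h t) t := fun t => (hdiff t).hasDerivAt
  have hdiff' : Differentiable ℝ (deriv h) :=
    (contDiff_infty_iff_deriv.mp (contDiff_infty_iff_deriv.mp hs1).2).1
  have hd2 : ∀ t, HasDerivAt (deriv h) (deriv (deriv h) t) t := fun t => (hdiff' t).hasDerivAt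
  have hcont1 : Continuous h := hdiff.continuous
  have hcont2 : Continuous (deriv h) := hdiff'.continuous
  -- The invariant set
  set W : Set ℝ := {t | h t ∈ Icc y x ∧ (deriv h t)^2 = P (h t)} with hWdef
  have hQcont : Continuous fun s : ℝ => A / max s (y/2) + B*s^4 + C*s^2 + 4 := by
    have h1 : Continuous fun s : ℝ => A / max s (y/2) :=
      continuous_const.div (continuous_id.max continuous_const)
        (fun s => ne_of_gt (lt_of_lt_of_le (by linarith) (le_max_right s (y/2))))
    exact ((h1.add (continuous_const.mul (continuous_pow 4))).add
      (continuous_const.mul (continuous_pow 2))).add continuous_const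
  have hWclosed : IsClosed W := by
    have hWeq : W = (fun t => (h t, (deriv h t)^2 -
        (A / max (h t) (y/2) + B*(h t)^4 + C*(h t)^2 + 4))) ⁻¹' (Icc y x ×ˢ {0}) := by
      ext t
      simp only [hWdef, mem_setOf_eq, mem_preimage, mem_prod, mem_Icc, mem_singleton_iff]
      constructor
      · rintro ⟨h1, h2⟩
        refine ⟨h1, ?_⟩
        rw [max_eq_left (by linarith [h1.1] : y/2 ≤ h t)]
        rw [hP] at h2
        simp only at h2
        linarith
      · rintro ⟨h1, h2⟩
        refine ⟨h1, ?_⟩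
        rw [max_eq_left (by linarith [h1.1] : y/2 ≤ h t)] at h2
        rw [hP]
        simp only
        linarith
    rw [hWeq]
    exact ((isClosed_Icc.prod isClosed_singleton)).preimage
      (hcont1.prodMk ((hcont2.pow 2).sub (hQcont.comp hcont1)))
  have hWopen : IsOpen W := by
    rw [isOpen_iff_forall_mem_open]
    intro t₀ ht₀
    obtain ⟨ht₀Icc, ht₀E⟩ := ht₀
    have hpos0 : 0 < h t₀ := lt_of_lt_of_le hy ht₀Icc.1
    have hev : ∀ᶠ t in 𝓝 t₀, 0 < h t :=
      hcont1.continuousAt.eventually (eventually_gt_nhds hpos0)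
    rw [Metric.eventually_nhds_iff] at hev
    obtain ⟨δ, hδ, hball⟩ := hev
    set I := Ioo (t₀ - δ) (t₀ + δ) with hIdef
    have hI0 : ∀ t ∈ I, 0 < h t := by
      intro t ht
      apply hball
      rw [Real.dist_eq, abs_lt]
      exact ⟨by linarith [ht.1], by linarith [ht.2]⟩
    have hmemI : t₀ ∈ I := ⟨by linarith, by linarith⟩
    have hFd : ∀ t ∈ I, HasDerivAt (fun s => (deriv h s)^2 - P (h s)) 0 t := by
      intro t ht
      have hne : h t ≠ 0 := ne_of_gt (hI0 t ht)
      have hPh : HasDerivAt (fun s => P (h s)) (Pd (h t) * deriv h t) t :=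
        (hPdAt (h t) hne).comp t (hd1 t)
      have hsq := (hd2 t).pow 2
      have hcomb := hsq.sub hPh
      refine hcomb.congr_deriv ?_
      rw [hODE t, hderivP (h t) hne]
      ring
    have hFc : ∀ t ∈ I, ContinuousAt (fun s => (deriv h s)^2 - P (h s)) t :=
      fun t ht => (hFd t ht).continuousAt
    have hIccsub : ∀ a b : ℝ, a ∈ I → b ∈ I → Icc a b ⊆ I := by
      intro a b ha hb s hs
      exact ⟨lt_of_lt_of_le ha.1 hs.1, lt_of_le_of_lt hs.2 hb.2⟩
    have hFconst : ∀ t ∈ I, (deriv h t)^2 - P (h t) = 0 := by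
      have hFt₀ : (deriv h t₀)^2 - P (h t₀) = 0 := by rw [ht₀E]; ring
      intro t ht
      rcases le_total t₀ t with hle | hle
      · have hc := constant_of_has_deriv_right_zero
          (f := fun s => (deriv h s)^2 - P (h s)) (a := t₀) (b := t)
          (fun s hs => (hFc s (hIccsub _ _ hmemI ht hs)).continuousWithinAt)
          (fun s hs => ((hFd s (hIccsub _ _ hmemI ht (Ico_subset_Icc_self hs))).hasDerivWithinAt))
          t (right_mem_Icc.mpr hle)
        rw [hc]
        exact hFt₀
      · have hc := constant_of_has_deriv_right_zero
          (f := fun s => (deriv h s)^2 - P (h s)) (a := t) (b := t₀)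
          (fun s hs => (hFc s (hIccsub _ _ ht hmemI hs)).continuousWithinAt)
          (fun s hs => ((hFd s (hIccsub _ _ ht hmemI (Ico_subset_Icc_self hs))).hasDerivWithinAt))
          t₀ (right_mem_Icc.mpr hle)
        rw [← hc]
        exact hFt₀
    have hEI : ∀ t ∈ I, (deriv h t)^2 = P (h t) := by
      intro t ht; have := hFconst t ht; linarith
    have hIccI : ∀ t ∈ I, h t ∈ Icc y x := by
      set U := {t : ℝ | ∀ᶠ s in 𝓝 t, h s ∈ Icc y x} with hUdef
      set V := {t : ℝ | h t ∉ Icc y x} with hVdef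
      have hUopen : IsOpen U := isOpen_setOf_eventually_nhds
      have hVopen : IsOpen V := by
        have : V = (h ⁻¹' Icc y x)ᶜ := rfl
        rw [this]
        exact isOpen_compl_iff.mpr (isClosed_Icc.preimage hcont1)
      have hcover : ∀ t ∈ I, t ∈ U ∪ V := by
        intro t ht
        by_cases hIcc : h t ∈ Icc y x
        · left
          rcases eq_or_lt_of_le hIcc.2 with hxx | hxx
          · have hd0 : deriv h t = 0 := by
              have h2 := hEI t ht
              rw [hxx, hPx] at h2
              exact pow_eq_zero_iff two_ne_zero |>.mp h2
            have hd2neg : deriv (deriv h) t < 0 := by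
              rw [hODE t, hxx, hPx']
              norm_num
            obtain ⟨ε, hε, Hmax⟩ := local_max_of_second_deriv_neg hd1 hd2 hd0 hd2neg
            have hnear : ∀ᶠ s in 𝓝 t, y < h s :=
              hcont1.continuousAt.eventually (eventually_gt_nhds (by rw [hxx]; exact hyx))
            have hball' : ∀ᶠ s in 𝓝 t, |s - t| ≤ ε :=
              Metric.eventually_nhds_iff.mpr
                ⟨ε, hε, fun s hs => le_of_lt (by rwa [Real.dist_eq] at hs)⟩
            filter_upwards [hnear, hball'] with s hs1 hs2
            refine ⟨le_of_lt hs1, ?_⟩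
            by_cases hst : s = t
            · rw [hst]; exact le_of_eq hxx
            · have := Hmax s hst hs2; rw [hxx] at this; exact le_of_lt this
          · rcases eq_or_lt_of_le hIcc.1 with hyy | hyy
            · have hd0 : deriv h t = 0 := by
                have h2 := hEI t ht
                rw [← hyy, hPy] at h2
                exact pow_eq_zero_iff two_ne_zero |>.mp h2
              have hd2pos : 0 < deriv (deriv h) t := by
                rw [hODE t, ← hyy, hPy']; norm_num
              obtain ⟨ε, hε, Hmin⟩ := local_min_of_second_deriv_pos hd1 hd2 hd0 hd2pos
              have hnear : ∀ᶠ s in 𝓝 t, h s < x :=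
                hcont1.continuousAt.eventually (eventually_lt_nhds (by rw [← hyy]; exact hyx))
              have hball' : ∀ᶠ s in 𝓝 t, |s - t| ≤ ε :=
                Metric.eventually_nhds_iff.mpr
                  ⟨ε, hε, fun s hs => le_of_lt (by rwa [Real.dist_eq] at hs)⟩
              filter_upwards [hnear, hball'] with s hs1 hs2
              refine ⟨?_, le_of_lt hs1⟩
              by_cases hst : s = t
              · rw [hst]; exact le_of_eq hyy
              · have := Hmin s hst hs2; rw [← hyy] at this; exact le_of_lt this
            · have hev2 : ∀ᶠ s in 𝓝 t, h s ∈ Ioo y x :=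
                hcont1.continuousAt (Ioo_mem_nhds hyy hxx)
              exact hev2.mono (fun s hs => ⟨le_of_lt hs.1, le_of_lt hs.2⟩)
        · right; exact hIcc
      by_contra hbad
      push_neg at hbad
      obtain ⟨tb, htbI, htbIcc⟩ := hbad
      have ht₀U : t₀ ∈ U := by
        rcases hcover t₀ hmemI with hU | hV
        · exact hU
        · exact absurd ht₀Icc hV
      have hUV : (I ∩ (U ∩ V)).Nonempty :=
        isPreconnected_Ioo U V hUopen hVopen (fun t ht => hcover t ht)
          ⟨t₀, hmemI, ht₀U⟩ ⟨tb, htbI, htbIcc⟩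
      obtain ⟨u, huI, huU, huV⟩ := hUV
      exact huV (huU.self_of_nhds)
    exact ⟨I, fun t ht => ⟨hIccI t ht, hEI t ht⟩, isOpen_Ioo, hmemI⟩
  have hWuniv : ∀ t : ℝ, t ∈ W := by
    have h0W : (0:ℝ) ∈ W := by
      refine ⟨by rw [h0]; exact ⟨le_refl y, le_of_lt hyx⟩, by rw [h0, h0', hPy]; norm_num⟩
    have := (IsClopen.eq_univ ⟨hWclosed, hWopen⟩ ⟨0, h0W⟩ : W = univ)
    intro t; rw [this]; trivial
  have hmem : ∀ t, h t ∈ Icc y x := fun t => (hWuniv t).1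
  have hE : ∀ t, (deriv h t)^2 = P (h t) := fun t => (hWuniv t).2
  have hpos : ∀ t, 0 < h t := fun t => lt_of_lt_of_le hy (hmem t).1
  -- critical points
  have hcrit : ∀ t, deriv h t = 0 → h t = y ∨ h t = x := by
    intro t ht
    by_contra hcon
    push_neg at hcon
    have hIoo : h t ∈ Ioo y x :=
      ⟨lt_of_le_of_ne (hmem t).1 (Ne.symm hcon.1), lt_of_le_of_ne (hmem t).2 hcon.2⟩
    have h1 := hPpos _ hIoo
    have h2 := hE t
    rw [ht] at h2
    simp at h2
    linarith
  -- derivative relation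
  have hd2' : ∀ t, HasDerivAt (deriv h) (1/2 * Pd (h t)) t := by
    intro t
    have := hd2 t
    rwa [hODE t, hderivP (h t) (ne_of_gt (hpos t))] at this
  -- reach x
  have hx_reach : ∃ t1 : ℝ, 0 < t1 ∧ h t1 = x := by
    by_contra hcon
    push_neg at hcon
    have hd20 : (0:ℝ) < deriv (deriv h) 0 := by
      rw [hODE 0, h0, hPy']; norm_num
    obtain ⟨δ₀, hδ₀, H₀⟩ := deriv_pos_right (hd2 0) hd20
    have hderivpos : ∀ t, 0 < t → 0 < deriv h t := by
      by_contra hc2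
      push_neg at hc2
      obtain ⟨s₀, hs₀, hs₀'⟩ := hc2
      have hs₀big : δ₀/2 ≤ s₀ := by
        by_contra hlt
        push_neg at hlt
        have := H₀ s₀ hs₀ (by linarith)
        rw [h0'] at this
        linarith
      set Z := {t : ℝ | δ₀/2 ≤ t ∧ deriv h t ≤ 0} with hZdef
      have hZne : Z.Nonempty := ⟨s₀, hs₀big, hs₀'⟩
      have hZclosed : IsClosed Z := by
        have hz2 : Z = Ici (δ₀/2) ∩ {t | deriv h t ≤ 0} := rfl
        rw [hz2]
        exact isClosed_Ici.inter (isClosed_le hcont2 continuous_const)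
      have hZbdd : BddBelow Z := ⟨δ₀/2, fun z hz => hz.1⟩
      have hsZ : sInf Z ∈ Z := hZclosed.csInf_mem hZne hZbdd
      set s := sInf Z with hsdef
      have hspos : 0 < s := lt_of_lt_of_le (by linarith) hsZ.1
      have hlt : ∀ t, 0 < t → t < s → 0 < deriv h t := by
        intro t ht hts
        by_cases hcase : t < δ₀/2
        · have := H₀ t ht (by linarith); rwa [h0'] at this
        · by_contra hle
          push_neg at hle
          have htZ : t ∈ Z := ⟨by linarith, hle⟩
          have := csInf_le hZbdd htZ
          linarith
      have hmono2 : StrictMonoOn h (Icc 0 s) := by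
        apply strictMonoOn_of_deriv_pos (convex_Icc _ _) hcont1.continuousOn
        intro t ht
        rw [interior_Icc] at ht
        exact hlt t ht.1 ht.2
      have hys : y < h s := by
        have := hmono2 ⟨le_refl 0, le_of_lt hspos⟩ ⟨le_of_lt hspos, le_refl s⟩ hspos
        rwa [h0] at this
      have hge : 0 ≤ deriv h s := by
        have htend : Tendsto (deriv h) (𝓝[<] s) (𝓝 (deriv h s)) :=
          hcont2.continuousAt.continuousWithinAt.tendsto
        apply ge_of_tendsto htend
        have hmemnhds : Ioo (s/2) s ∈ 𝓝[<] s :=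
          Ioo_mem_nhdsLT_of_mem ⟨by linarith, le_refl s⟩
        exact eventually_of_mem hmemnhds
          (fun t ht2 => le_of_lt (hlt t (by linarith [ht2.1]) ht2.2))
      have hs0 : deriv h s = 0 := le_antisymm hsZ.2 hge
      rcases hcrit s hs0 with hsy | hsx
      · rw [hsy] at hys; linarith
      · exact hcon s hspos hsx
    have hmonoinf : StrictMonoOn h (Ici 0) := by
      apply strictMonoOn_of_deriv_pos (convex_Ici 0) hcont1.continuousOn
      intro t ht
      rw [interior_Ici] at ht
      exact hderivpos t ht
    set k := fun t : ℝ => h (max t 0) with hkdef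
    have hkmono : Monotone k := by
      intro a b hab
      rcases eq_or_lt_of_le (max_le_max hab (le_refl (0:ℝ))) with heq | hlt'
      · simp only [hkdef]; rw [heq]
      · exact le_of_lt (hmonoinf (le_max_right a 0) (le_max_right b 0) hlt')
    have hkbdd : BddAbove (range k) := by
      refine ⟨x, ?_⟩
      rintro v ⟨t, rfl⟩
      exact (hmem _).2
    have hktend : Tendsto k atTop (𝓝 (⨆ t, k t)) := tendsto_atTop_ciSup hkmono hkbdd
    set L := ⨆ t, k t with hLdef
    have hhk : h =ᶠ[atTop] k := by
      filter_upwards [eventually_ge_atTop (0:ℝ)] with t ht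
      simp only [hkdef]
      rw [max_eq_left ht]
    have hhtend : Tendsto h atTop (𝓝 L) := hktend.congr' hhk.symm
    have hLle : L ≤ x := ciSup_le (fun t => (hmem _).2)
    have hk1 : k 1 = h 1 := by simp only [hkdef]; rw [max_eq_left zero_le_one]
    have hyL : y < L := by
      have h1 : y < h 1 := by
        have := hmonoinf (mem_Ici.mpr (le_refl 0)) (mem_Ici.mpr zero_le_one) zero_lt_one
        rwa [h0] at this
      have h2 : h 1 ≤ L := by rw [← hk1]; exact le_ciSup hkbdd 1
      linarith
    have hLne : L ≠ 0 := ne_of_gt (lt_trans hy hyL)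
    rcases lt_or_eq_of_le hLle with hLlt | hLeq
    · have hPL : 0 < P L := hPpos L ⟨hyL, hLlt⟩
      have htPL : Tendsto (fun t => P (h t)) atTop (𝓝 (P L)) :=
        ((hPcont L hLne).tendsto).comp hhtend
      have hev : ∀ᶠ t in atTop, P L / 2 < P (h t) :=
        htPL.eventually (eventually_gt_nhds (by linarith))
      obtain ⟨M, hM⟩ := eventually_atTop.mp (hev.and (eventually_gt_atTop 0))
      set c := Real.sqrt (P L / 2) with hcdef
      have hc : 0 < c := Real.sqrt_pos.mpr (by linarith)
      have hc' : ∀ t, M ≤ t → c ≤ deriv h t := by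
        intro t ht
        obtain ⟨hPt, htpos⟩ := hM t ht
        have h1 : 0 < deriv h t := hderivpos t htpos
        have h2 : c^2 ≤ (deriv h t)^2 := by
          rw [hcdef, Real.sq_sqrt (by linarith : (0:ℝ) ≤ P L / 2), hE t]
          linarith
        nlinarith
      have hg : MonotoneOn (fun t => h t - c*t) (Ici M) := by
        apply monotoneOn_of_deriv_nonneg (convex_Ici M)
          ((show Continuous fun u : ℝ => h u - c * u from
            hcont1.sub (continuous_const.mul continuous_id)).continuousOn)
        · intro t ht
          have Hc : HasDerivAt (fun u : ℝ => c * u) (c * 1) t := (hasDerivAt_id t).const_mul c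
          have H : HasDerivAt (fun u : ℝ => h u - c * u) (deriv h t - c * 1) t := (hd1 t).sub Hc
          exact H.differentiableAt.differentiableWithinAt
        · intro t ht
          rw [interior_Ici] at ht
          have Hc : HasDerivAt (fun u : ℝ => c * u) (c * 1) t := (hasDerivAt_id t).const_mul c
          have H : HasDerivAt (fun u : ℝ => h u - c * u) (deriv h t - c * 1) t := (hd1 t).sub Hc
          rw [H.deriv]
          linarith [hc' t (le_of_lt ht)]
      obtain ⟨T, hTdef⟩ : ∃ T : ℝ, T = M + (x + 1 - h M)/c := ⟨_, rfl⟩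
      have hxM : h M ≤ x := (hmem M).2
      have hTM : M ≤ T := by
        have : 0 ≤ (x + 1 - h M)/c := div_nonneg (by linarith) hc.le
        rw [hTdef]; linarith
      have hgM := hg (mem_Ici.mpr (le_refl M)) (mem_Ici.mpr hTM) hTM
      simp only at hgM
      have hcT : c * T - c * M = x + 1 - h M := by
        rw [hTdef]
        field_simp
        ring
      have hTbig : x + 1 ≤ h T := by linarith [hgM, hcT]
      linarith [(hmem T).2]
    · have hPdtend : Tendsto (fun t : ℝ => deriv (deriv h) t) atTop (𝓝 (-1)) := by
        have h1 : Tendsto (fun t => Pd (h t)) atTop (𝓝 (Pd x)) := by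
          apply ((hPdcont x hxne).tendsto).comp
          rw [← hLeq]
          exact hhtend
        have h2 : ∀ t, deriv (deriv h) t = 1/2 * Pd (h t) := by
          intro t; rw [hODE t, hderivP (h t) (ne_of_gt (hpos t))]
        rw [show (-1 : ℝ) = 1/2 * Pd x by rw [hPdx]; norm_num]
        exact (h1.const_mul (1/2)).congr (fun t => (h2 t).symm)
      have hev : ∀ᶠ t in atTop, deriv (deriv h) t < -(1/2) :=
        hPdtend.eventually (eventually_lt_nhds (by norm_num))
      obtain ⟨M, hM⟩ := eventually_atTop.mp (hev.and (eventually_gt_atTop 0))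
      have hanti : AntitoneOn (fun t => deriv h t + t/2) (Ici M) := by
        apply antitoneOn_of_deriv_nonpos (convex_Ici M)
          ((show Continuous fun u : ℝ => deriv h u + u/2 from
            hcont2.add (continuous_id.div_const 2)).continuousOn)
        · intro t ht
          have Hc : HasDerivAt (fun u : ℝ => u/2) (1/2 : ℝ) t := by
            simpa using (hasDerivAt_id t).div_const 2
          have H : HasDerivAt (fun u : ℝ => deriv h u + u/2) (deriv (deriv h) t + 1/2) t :=
            (hd2 t).add Hc
          exact H.differentiableAt.differentiableWithinAt
        · intro t ht
          rw [interior_Ici] at ht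
          have Hc : HasDerivAt (fun u : ℝ => u/2) (1/2 : ℝ) t := by
            simpa using (hasDerivAt_id t).div_const 2
          have H : HasDerivAt (fun u : ℝ => deriv h u + u/2) (deriv (deriv h) t + 1/2) t :=
            (hd2 t).add Hc
          rw [H.deriv]
          have := (hM t (le_of_lt ht)).1
          linarith
      have hdM : 0 < deriv h M := hderivpos M (hM M le_rfl).2
      obtain ⟨T, hTdef⟩ : ∃ T : ℝ, T = M + 2 * deriv h M + 2 := ⟨_, rfl⟩
      have hTM : M ≤ T := by rw [hTdef]; linarith
      have hkey := hanti (mem_Ici.mpr (le_refl M)) (mem_Ici.mpr hTM) hTM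
      simp only at hkey
      have hTpos : 0 < T := by rw [hTdef]; linarith [(hM M le_rfl).2]
      have hTd := hderivpos T hTpos
      rw [hTdef] at hkey hTd
      linarith
  -- symmetry
  have hsym : ∀ r, deriv h r = 0 → ∀ t, h (2*r - t) = h t := by
    have hPddiff : ∀ s ∈ Icc y x, DifferentiableAt ℝ Pd s := by
      intro s hs
      exact (hasDerivAt_Pd A B C (ne_of_gt (lt_of_lt_of_le hy hs.1))).differentiableAt
    have hPddval : ∀ s ∈ Icc y x, deriv Pd s = 2*A/s^3 + 12*B*s^2 + 2*C := by
      intro s hs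
      exact (hasDerivAt_Pd A B C (ne_of_gt (lt_of_lt_of_le hy hs.1))).deriv
    have hPddcont : ContinuousOn (fun s : ℝ => 2*A/s^3 + 12*B*s^2 + 2*C) (Icc y x) := by
      apply ContinuousOn.add
      apply ContinuousOn.add
      · exact continuousOn_const.div (continuous_pow 3).continuousOn
          (fun s hs => pow_ne_zero 3 (ne_of_gt (lt_of_lt_of_le hy hs.1)))
      · exact (continuous_const.mul (continuous_pow 2)).continuousOn
      · exact continuousOn_const
    obtain ⟨Kb, hKb⟩ := isCompact_Icc.exists_bound_of_continuousOn hPddcont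
    have hlipPd : LipschitzOnWith (Real.toNNReal Kb) Pd (Icc y x) := by
      apply Convex.lipschitzOnWith_of_nnnorm_deriv_le hPddiff ?_ (convex_Icc y x)
      intro s hs
      rw [← NNReal.coe_le_coe, coe_nnnorm, Real.coe_toNNReal']
      rw [hPddval s hs]
      exact le_trans (hKb s hs) (le_max_left _ _)
    have hvlip : ∀ t : ℝ, LipschitzOnWith (Real.toNNReal Kb + 1)
        (fun p : ℝ × ℝ => (p.2, 1/2 * Pd p.1)) (Icc y x ×ˢ (univ : Set ℝ)) := by
      intro t
      rw [lipschitzOnWith_iff_dist_le_mul]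
      intro p hp q hq
      have hKK : ((Real.toNNReal Kb + 1 : NNReal) : ℝ) = (Real.toNNReal Kb : ℝ) + 1 := by
        push_cast; ring
      have hKnn : (0:ℝ) ≤ (Real.toNNReal Kb : ℝ) := NNReal.coe_nonneg _
      have hd0 : (0:ℝ) ≤ dist p q := dist_nonneg
      rw [Prod.dist_eq]
      apply max_le
      · have h1 : dist p.2 q.2 ≤ dist p q := by rw [Prod.dist_eq]; exact le_max_right _ _
        rw [hKK]
        nlinarith
      · have h2 : dist (Pd p.1) (Pd q.1) ≤ (Real.toNNReal Kb : ℝ) * dist p.1 q.1 :=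
          lipschitzOnWith_iff_dist_le_mul.mp hlipPd _ hp.1 _ hq.1
        have h3 : dist p.1 q.1 ≤ dist p q := by rw [Prod.dist_eq]; exact le_max_left _ _
        have h4 : dist (1/2 * Pd p.1) (1/2 * Pd q.1) = 1/2 * dist (Pd p.1) (Pd q.1) := by
          rw [Real.dist_eq, Real.dist_eq, ← mul_sub, abs_mul]
          norm_num
        rw [h4, hKK]
        nlinarith
    intro r hr t0
    have hf' : ∀ t : ℝ, HasDerivAt (fun u => (h u, deriv h u))
        ((fun p : ℝ × ℝ => (p.2, 1/2 * Pd p.1)) (h t, deriv h t)) t :=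
      fun t => (hd1 t).prodMk (hd2' t)
    have hinner : ∀ t : ℝ, HasDerivAt (fun u : ℝ => 2*r - u) (-1) t := by
      intro t
      simpa using (hasDerivAt_id t).const_sub (2*r)
    have hg1 : ∀ t : ℝ, HasDerivAt (fun u : ℝ => h (2*r - u)) (-deriv h (2*r - t)) t := by
      intro t
      have H := (hd1 (2*r - t)).comp t (hinner t)
      have H2 : HasDerivAt (fun u : ℝ => h (2*r - u)) (deriv h (2*r - t) * (-1)) t := H
      simpa using H2
    have hg2 : ∀ t : ℝ,
        HasDerivAt (fun u : ℝ => -deriv h (2*r - u)) (1/2 * Pd (h (2*r - t))) t := by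
      intro t
      have H := ((hd2' (2*r - t)).comp t (hinner t)).neg
      have H2 : HasDerivAt (fun u : ℝ => -deriv h (2*r - u))
          (-((1/2 * Pd (h (2*r - t))) * (-1))) t := H
      have e : -((1/2 * Pd (h (2*r - t))) * (-1)) = 1/2 * Pd (h (2*r - t)) := by ring
      rwa [e] at H2
    have hg' : ∀ t : ℝ, HasDerivAt (fun u : ℝ => (h (2*r - u), -deriv h (2*r - u)))
        ((fun p : ℝ × ℝ => (p.2, 1/2 * Pd p.1)) (h (2*r - t), -deriv h (2*r - t))) t :=
      fun t => (hg1 t).prodMk (hg2 t)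
    have hminle := min_le_left r t0
    have hminle' := min_le_right r t0
    have hmaxle := le_max_left r t0
    have hmaxle' := le_max_right r t0
    have hab : r ∈ Ioo (min r t0 - 1) (max r t0 + 1) := ⟨by linarith, by linarith⟩
    have heq := ODE_solution_unique_of_mem_Ioo (v := fun _ p => (p.2, 1/2 * Pd p.1))
      (s := fun _ => Icc y x ×ˢ (univ : Set ℝ)) (fun t _ => hvlip t) hab
      (fun t _ => ⟨hf' t, ⟨hmem t, mem_univ _⟩⟩)
      (fun t _ => ⟨hg' t, ⟨hmem _, mem_univ _⟩⟩)
      (by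
        have e : 2*r - r = r := by ring
        rw [e, hr]
        simp)
    have ht0mem : t0 ∈ Ioo (min r t0 - 1) (max r t0 + 1) := ⟨by linarith, by linarith⟩
    have := heq ht0mem
    exact (congrArg Prod.fst this).symm
  obtain ⟨t1, ht1pos, ht1x⟩ := hx_reach
  have hsym0 : ∀ t, h (-t) = h t := by
    intro t
    have := hsym 0 h0' t
    simpa using this
  have h't1 : deriv h t1 = 0 := by
    have := hE t1
    rw [ht1x, hPx] at this
    exact pow_eq_zero_iff (two_ne_zero).elim |>.mp this
  have hsymt1 := hsym t1 h't1
  refine ⟨⟨2*t1, by linarith, fun t => ?_⟩, ?_, hE⟩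
  · have h1 := hsymt1 (-t)
    rw [show 2*t1 - -t = t + 2*t1 by ring] at h1
    rw [h1, hsym0 t]
  · apply Subset.antisymm
    · rintro _ ⟨t, rfl⟩; exact hmem t
    · intro z hz
      have hIVT := intermediate_value_Icc (le_of_lt ht1pos) (hcont1.continuousOn)
      rw [h0, ht1x] at hIVT
      obtain ⟨t, _, hteq⟩ := hIVT hz
      exact ⟨t, hteq⟩
end
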